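/- Let θ be a domestic collineation of a generalised 2m-gon with parameters (s,t), and suppose there is a fixed point p₀ and a fixed line L₀ with d(p₀, L₀) = 2m − 1 in the incidence graph. Then either all lines through p₀ are fixed by θ, or all points on L₀ are fixed by θ. -/

import Mathlib

open SimpleGraph

/-- The incidence graph of a point-line geometry, on vertex set `P ⊕ L`. -/
def incGraph {P L : Type*} (inc : P → L → Prop) : SimpleGraph (P ⊕ L) where
  Adj x y := (∃ p l, x = Sum.inl p ∧ y = Sum.inr l ∧ inc p l) ∨
             (∃ p l, x = Sum.inr l ∧ y = Sum.inl p ∧ inc p l)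
  symm := by
    constructor
    rintro x y (⟨p, l, rfl, rfl, h⟩ | ⟨p, l, rfl, rfl, h⟩)
    · exact Or.inr ⟨p, l, rfl, rfl, h⟩
    · exact Or.inl ⟨p, l, rfl, rfl, h⟩
  loopless := by
    constructor
    rintro x (⟨p, l, rfl, h, _⟩ | ⟨p, l, rfl, h, _⟩) <;> cases h

/-- A (weak) generalised `n`-gon: the incidence graph is connected, has diameter `n` and
girth `2n`. -/
structure IsGenPolygon {P L : Type*} (n : ℕ) (inc : P → L → Prop) : Prop where
  connected : (incGraph inc).Connected
  dist_le : ∀ x y : P ⊕ L, (incGraph inc).dist x y ≤ n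
  exists_dist_eq : ∃ x y : P ⊕ L, (incGraph inc).dist x y = n
  girth_eq : (incGraph inc).girth = (2 * n : ℕ)

/-- Thickness: every point is on at least three lines and every line carries at least three
points. -/
def IsThick {P L : Type*} (inc : P → L → Prop) : Prop :=
  (∀ p : P, ∃ l₁ l₂ l₃ : L, inc p l₁ ∧ inc p l₂ ∧ inc p l₃ ∧ l₁ ≠ l₂ ∧ l₁ ≠ l₃ ∧ l₂ ≠ l₃) ∧
  (∀ l : L, ∃ p₁ p₂ p₃ : P, inc p₁ l ∧ inc p₂ l ∧ inc p₃ l ∧ p₁ ≠ p₂ ∧ p₁ ≠ p₃ ∧ p₂ ≠ p₃)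

/-- The geometry has parameters `(s, t)`: each line carries `s + 1` points and each point is
on `t + 1` lines. -/
def HasParams {P L : Type*} (inc : P → L → Prop) (s t : ℕ) : Prop :=
  (∀ l : L, Nat.card {p : P // inc p l} = s + 1) ∧
  (∀ p : P, Nat.card {l : L // inc p l} = t + 1)

/-- A collineation: a pair of permutations of the points and the lines preserving
incidence. -/
def IsCollineation {P L : Type*} (inc : P → L → Prop) (θP : Equiv.Perm P)
    (θL : Equiv.Perm L) : Prop :=
  ∀ p l, inc p l ↔ inc (θP p) (θL l)

/-- Two chambers `{p, l}` and `{p', l'}` of a generalised `m`-gon are opposite. -/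
def OppChambers {P L : Type*} (inc : P → L → Prop) (m : ℕ)
    (p p' : P) (l l' : L) : Prop :=
  ((incGraph inc).dist (Sum.inl p) (Sum.inl p') = m ∧
    (incGraph inc).dist (Sum.inr l) (Sum.inr l') = m) ∨
  ((incGraph inc).dist (Sum.inl p) (Sum.inr l') = m ∧
    (incGraph inc).dist (Sum.inr l) (Sum.inl p') = m)

/-- A collineation is domestic if it maps no chamber to an opposite chamber. -/
def IsDomesticColl {P L : Type*} (inc : P → L → Prop) (m : ℕ) (θP : Equiv.Perm P)
    (θL : Equiv.Perm L) : Prop :=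
  ¬ ∃ p l, inc p l ∧ OppChambers inc m p (θP p) l (θL l)


/-!
Suppose a line `M ∋ p₀` and a point `q ∈ L₀` both move. As the girth is `4m`, a path of length
less than `2m` between two fixed vertices is their unique geodesic, hence is fixed pointwise; so
`d(p₀, q) = d(L₀, M) = 2m` and `d(q, M) = 2m - 1`. On a geodesic from `q` to `M` let `x` be the
vertex at distance `m - 1` from `q`. The walk `x ⇝ q — L₀ — θq ⇝ θx` has length `2m`, and its two
halves leave `L₀` along different edges, so the girth forces it to be a geodesic: `x` is opposite
`θx`. Symmetrically the neighbour `y` of `x` at distance `m - 1` from `M` is opposite `θy`, and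
the chamber `{x, y}` is mapped to an opposite chamber.
-/

namespace SimpleGraph

variable {V : Type*} {G : SimpleGraph V} {N : ℕ} {u v w : V}

namespace Walk

theorem IsPath.le_length_add_length_of_ne (hN : (N : ℕ∞) ≤ G.egirth) {p q : G.Walk u v}
    (hp : p.IsPath) (hq : q.IsPath) (hpq : p ≠ q) : N ≤ p.length + q.length := by
  classical
  induction p with
  | nil =>
    cases q with
    | nil => exact absurd rfl hpq
    | cons _ q => simp at hq
  | @cons u x v hux p ih =>
    cases q with
    | nil => simp at hp
    | @cons _ y _ huy q =>
      by_cases hxy : x = y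
      · subst hxy
        have := ih hp.of_cons hq.of_cons (fun h => hpq (h ▸ rfl))
        simp only [length_cons]
        omega
      · -- `u — x ⇝ v ⇝ u` shortcuts to a cycle through the edge `ux`
        set r := (p.append (cons huy q).reverse).bypass
        have hr : s(u, x) ∉ r.edges := by
          intro he
          have he := edges_bypass_subset_edges _ he
          rw [edges_append, List.mem_append, edges_reverse, List.mem_reverse, edges_cons,
            List.mem_cons, Sym2.eq_iff] at he
          rcases he with he | (⟨-, he⟩ | ⟨-, he⟩) | he
          · exact (cons_isPath_iff _ _).1 hp |>.2 (p.fst_mem_support_of_mem_edges he)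
          · exact hxy he
          · exact hux.ne he.symm
          · exact (cons_isPath_iff _ _).1 hq |>.2 (q.fst_mem_support_of_mem_edges he)
        have hcyc : (cons hux r).IsCycle := (cons_isCycle_iff _ _).2 ⟨bypass_isPath _, hr⟩
        have hle : N ≤ r.length + 1 := by exact_mod_cast le_egirth.1 hN _ _ hcyc
        have hr_le : r.length ≤ p.length + (q.length + 1) :=
          (length_bypass_le_length _).trans (by simp)
        simp only [length_cons]
        omega

theorem IsPath.length_eq_dist (hN : (N : ℕ∞) ≤ G.egirth) {p : G.Walk u v} (hp : p.IsPath)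
    (hlen : 2 * p.length ≤ N) : p.length = G.dist u v := by
  obtain ⟨q, hq, hql⟩ := p.reachable.exists_path_of_dist
  by_contra hne
  have hlt : q.length < p.length := hql ▸ lt_of_le_of_ne (dist_le p) (Ne.symm hne)
  have := hp.le_length_add_length_of_ne hN hq (by rintro rfl; omega)
  omega

theorem IsPath.append {p : G.Walk u v} {q : G.Walk v w} (hp : p.IsPath) (hq : q.IsPath)
    (h : ∀ x ∈ p.support, x ∈ q.support → x = v) : (p.append q).IsPath := by
  have hq' := hq.support_nodup
  rw [← cons_tail_support] at hq'
  rw [isPath_def, support_append, List.nodup_append]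
  refine ⟨hp.support_nodup, hq'.of_cons, ?_⟩
  rintro x hxp _ hxq rfl
  obtain rfl := h x hxp (List.mem_of_mem_tail hxq)
  exact (List.nodup_cons.1 hq').1 hxq

theorem IsPath.eq_of_mem_support_of_snd_ne (hN : (N : ℕ∞) ≤ G.egirth) {p : G.Walk u v}
    {q : G.Walk u w} (hp : p.IsPath) (hq : q.IsPath) (hsnd : p.snd ≠ q.snd)
    (hlen : p.length + q.length < N) {x : V} (hxp : x ∈ p.support) (hxq : x ∈ q.support) :
    x = u := by
  classical
  by_contra hxu
  have hne : p.takeUntil x hxp ≠ q.takeUntil x hxq := fun h => hsnd <| by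
    rw [← snd_takeUntil hxu p hxp, ← snd_takeUntil hxu q hxq, h]
  have := (hp.takeUntil hxp).le_length_add_length_of_ne hN (hq.takeUntil hxq) hne
  have := length_takeUntil_le_length p hxp
  have := length_takeUntil_le_length q hxq
  omega

theorem IsPath.apply_eq_self_of_mem_support (hN : (N : ℕ∞) ≤ G.egirth) (f : G ≃g G)
    {p : G.Walk u v} (hp : p.IsPath) (hu : f u = u) (hv : f v = v) (hlen : 2 * p.length < N)
    {x : V} (hx : x ∈ p.support) : f x = x := by
  have hmap : (p.map f.toHom).copy hu hv = p := by
    by_contra hne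
    have := ((isPath_copy _ _ _).2 (hp.map f.injective)).le_length_add_length_of_ne hN hp hne
    simp only [length_copy, length_map] at this
    omega
  obtain ⟨n, rfl, -⟩ := mem_support_iff_exists_getVert.1 hx
  simpa [getVert_copy, getVert_map] using congrArg (·.getVert n) hmap

end Walk

open Walk

theorem Iso.apply_eq_self_of_adj_of_dist_lt (hN : (N : ℕ∞) ≤ G.egirth) (f : G ≃g G)
    {a b : V} (ha : f a = a) (hb : f b = b) (hub : G.Adj u b) (hu : G.dist a u < G.dist a b)
    (hab : 2 * G.dist a b < N) : f u = u := by
  obtain ⟨D, hD⟩ := ((Reachable.of_dist_ne_zero (by omega : G.dist a b ≠ 0)).trans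
    hub.reachable.symm).exists_walk_length_eq_dist
  have hlen : (D.concat hub).length = G.dist a b :=
    le_antisymm (by simp only [length_concat]; omega) (dist_le _)
  exact (isPath_of_length_eq_dist _ hlen).apply_eq_self_of_mem_support hN f ha hb (by omega)
    (by simp [support_concat])

theorem Iso.dist_apply_eq_two_mul_dist (hN : (N : ℕ∞) ≤ G.egirth) (f : G ≃g G) {c x : V}
    (hc : f c = c) (hcu : G.Adj c u) (hu : f u ≠ u) (hx : G.dist c x = G.dist u x + 1)
    (hcx : 4 * G.dist c x ≤ N) : G.dist x (f x) = 2 * G.dist c x := by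
  obtain ⟨π, hπ⟩ := (hcu.reachable.symm.trans
    (Reachable.of_dist_ne_zero (by omega : G.dist c x ≠ 0))).exists_walk_length_eq_dist
  set γ := cons hcu π
  have hγ : γ.IsPath := isPath_of_length_eq_dist γ (by simp [γ, hπ, hx])
  set γ' := (γ.map f.toHom).copy hc rfl
  have hγ' : γ'.IsPath := (isPath_copy _ _ _).2 (hγ.map f.injective)
  have hsnd : γ.snd ≠ γ'.snd := by
    simpa [γ, γ', snd, getVert_copy, getVert_map] using hu.symm
  have hS := hγ.reverse.append hγ' fun y hy hy' =>
    hγ.eq_of_mem_support_of_snd_ne hN hγ' hsnd (by simp [γ', γ]; omega)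
      (by simpa using hy) hy'
  have := hS.length_eq_dist hN (by simp [γ', γ]; omega)
  simp [γ', γ] at this
  omega

theorem exists_adj_dist_eq_of_dist_eq {k : ℕ} {c u d v : V} (hcu : G.Adj c u)
    (hdv : G.Adj d v) (huv : G.dist u v + 1 = 2 * k) (hcv : G.dist c v = 2 * k)
    (hdu : G.dist d u = 2 * k) :
    ∃ x y, G.Adj x y ∧ G.dist c x = G.dist u x + 1 ∧ G.dist c x = k ∧
      G.dist d y = G.dist v y + 1 ∧ G.dist d y = k := by
  obtain ⟨W, hW⟩ := exists_walk_of_dist_ne_zero (G := G) (u := u) (v := v) (by omega)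
  set x := W.getVert (k - 1)
  set y := W.getVert k
  have hxy : G.Adj x y := by
    simpa [x, y, show k - 1 + 1 = k by omega] using W.adj_getVert_succ (i := k - 1) (by omega)
  refine ⟨x, y, hxy, ?_⟩
  have hux : G.dist u x ≤ k - 1 := (dist_le (W.take (k - 1))).trans (by simp)
  have hvy : G.dist v y ≤ k - 1 :=
    dist_comm (G := G) ▸ (dist_le (W.drop k)).trans (by simp; omega)
  have hcx : G.dist c v ≤ G.dist c x + G.dist x v :=
    (W.drop (k - 1)).reachable.dist_triangle_right c
  have hdy : G.dist d u ≤ G.dist d y + G.dist y u :=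
    (W.take k).reachable.symm.dist_triangle_right d
  have hcux := hcu.symm.diff_dist_adj (u := x)
  have hdvy := hdv.symm.diff_dist_adj (u := y)
  have hxyv := hxy.diff_dist_adj (u := v)
  have hyxu := hxy.symm.diff_dist_adj (u := u)
  have := dist_comm (G := G) (u := x) (v := u)
  have := dist_comm (G := G) (u := x) (v := v)
  have := dist_comm (G := G) (u := y) (v := u)
  have := dist_comm (G := G) (u := y) (v := v)
  have := dist_comm (G := G) (u := y) (v := d)
  have := dist_comm (G := G) (u := x) (v := c)
  omega

end SimpleGraph

section IncidenceGraph

variable {P L : Type*} {inc : P → L → Prop}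

theorem incGraph_adj_inl_inr {p : P} {l : L} (h : inc p l) :
    (incGraph inc).Adj (Sum.inl p) (Sum.inr l) :=
  Or.inl ⟨p, l, rfl, rfl, h⟩

def incGraphColoring (inc : P → L → Prop) : (incGraph inc).Coloring Bool :=
  Coloring.mk Sum.isLeft <| by
    rintro _ _ (⟨p, l, rfl, rfl, -⟩ | ⟨p, l, rfl, rfl, -⟩) <;> simp

theorem even_dist_incGraph_iff {x y : P ⊕ L} (h : (incGraph inc).Reachable x y) :
    Even ((incGraph inc).dist x y) ↔ (x.isLeft ↔ y.isLeft) := by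
  obtain ⟨W, hW⟩ := h.exists_walk_length_eq_dist
  exact hW ▸ (incGraphColoring inc).even_length_iff_congr W

theorem IsGenPolygon.le_egirth {n : ℕ} (hpoly : IsGenPolygon n inc) :
    ((2 * n : ℕ) : ℕ∞) ≤ (incGraph inc).egirth :=
  SimpleGraph.le_egirth.2 fun _ _ hw => by exact_mod_cast hpoly.girth_eq ▸ girth_le_length hw

def IsCollineation.toIso {θP : Equiv.Perm P} {θL : Equiv.Perm L}
    (h : IsCollineation inc θP θL) : incGraph inc ≃g incGraph inc where
  toEquiv := Equiv.sumCongr θP θL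
  map_rel_iff' := by
    rintro (p | l) (p | l) <;> simp [incGraph, (h _ _).symm]

theorem IsDomesticColl.dist_apply_ne_of_adj {n : ℕ} {θP : Equiv.Perm P} {θL : Equiv.Perm L}
    (hdom : IsDomesticColl inc n θP θL) (hcoll : IsCollineation inc θP θL) {x y : P ⊕ L}
    (hxy : (incGraph inc).Adj x y) (hx : (incGraph inc).dist x (hcoll.toIso x) = n) :
    (incGraph inc).dist y (hcoll.toIso y) ≠ n := by
  intro hy
  rcases hxy with ⟨p, l, rfl, rfl, h⟩ | ⟨p, l, rfl, rfl, h⟩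
  · exact hdom ⟨p, l, h, Or.inl ⟨hx, hy⟩⟩
  · exact hdom ⟨p, l, h, Or.inl ⟨hy, hx⟩⟩

theorem IsGenPolygon.dist_eq_of_adj_of_apply_ne {m : ℕ} (hm : 1 ≤ m)
    (hpoly : IsGenPolygon (2 * m) inc) (f : incGraph inc ≃g incGraph inc) {a b u : P ⊕ L}
    (ha : f a = a) (hb : f b = b) (hub : (incGraph inc).Adj u b) (hu : f u ≠ u)
    (hab : (incGraph inc).dist a b = 2 * m - 1) (hau : a.isLeft ↔ u.isLeft) :
    (incGraph inc).dist a u = 2 * m := by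
  have hlt : ¬ (incGraph inc).dist a u < (incGraph inc).dist a b := fun h =>
    hu (f.apply_eq_self_of_adj_of_dist_lt hpoly.le_egirth ha hb hub h (by omega))
  obtain ⟨r, hr⟩ := (even_dist_incGraph_iff (hpoly.connected a u)).2 hau
  have := hpoly.dist_le a u
  omega

theorem IsGenPolygon.dist_add_one_eq_of_adj {m : ℕ} (hpoly : IsGenPolygon (2 * m) inc)
    {a b u : P ⊕ L} (hab : (incGraph inc).Adj a b) (hau : (incGraph inc).dist a u = 2 * m)
    (hbu : ¬ (b.isLeft ↔ u.isLeft)) : (incGraph inc).dist b u + 1 = 2 * m := by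
  have htri := hab.reachable.dist_triangle_left u
  rw [dist_eq_one_iff_adj.2 hab] at htri
  obtain ⟨r, hr⟩ : Odd ((incGraph inc).dist b u) := by
    rwa [← Nat.not_even_iff_odd, even_dist_incGraph_iff (hpoly.connected b u)]
  have := hpoly.dist_le b u
  omega

end IncidenceGraph

theorem domestic_fix_near_opposite_flag_general {P L : Type*} (m : ℕ) (hm : 1 ≤ m)
    (inc : P → L → Prop) (hpoly : IsGenPolygon (2 * m) inc)
    (θP : Equiv.Perm P) (θL : Equiv.Perm L) (hcoll : IsCollineation inc θP θL)
    (hdom : IsDomesticColl inc (2 * m) θP θL)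
    (p₀ : P) (L₀ : L) (hp₀ : θP p₀ = p₀) (hL₀ : θL L₀ = L₀)
    (hdist : (incGraph inc).dist (Sum.inl p₀) (Sum.inr L₀) = 2 * m - 1) :
    (∀ l : L, inc p₀ l → θL l = l) ∨ (∀ p : P, inc p L₀ → θP p = p) := by
  by_contra! ⟨⟨M, hM, hMθ⟩, q, hq, hqθ⟩
  set f := hcoll.toIso
  have hp₀f : f (.inl p₀) = .inl p₀ := congrArg Sum.inl hp₀
  have hL₀f : f (.inr L₀) = .inr L₀ := congrArg Sum.inr hL₀
  have hqf : f (.inl q) ≠ .inl q := fun h => hqθ (Sum.inl_injective h)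
  have hMf : f (.inr M) ≠ .inr M := fun h => hMθ (Sum.inr_injective h)
  have hp₀M := incGraph_adj_inl_inr hM
  have hL₀q := (incGraph_adj_inl_inr hq).symm
  have hp₀q : (incGraph inc).dist (.inl p₀) (.inl q) = 2 * m :=
    hpoly.dist_eq_of_adj_of_apply_ne hm f hp₀f hL₀f hL₀q.symm hqf hdist (by simp)
  have hL₀M : (incGraph inc).dist (.inr L₀) (.inr M) = 2 * m :=
    hpoly.dist_eq_of_adj_of_apply_ne hm f hL₀f hp₀f hp₀M.symm hMf (dist_comm.trans hdist)
      (by simp)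
  obtain ⟨x, y, hxy, hx, hx', hy, hy'⟩ := exists_adj_dist_eq_of_dist_eq hp₀M hL₀q
    (hpoly.dist_add_one_eq_of_adj hp₀M hp₀q (by simp)) hp₀q hL₀M
  have hN := hpoly.le_egirth
  exact hdom.dist_apply_ne_of_adj hcoll hxy
    (by rw [f.dist_apply_eq_two_mul_dist hN hp₀f hp₀M hMf hx (by omega), hx'])
    (by rw [f.dist_apply_eq_two_mul_dist hN hL₀f hL₀q hqf hy (by omega), hy'])

/-- If a domestic collineation of a thick generalised `2m`-gon fixes a point `p₀` and a line
`L₀` with `d(p₀, L₀) = 2m − 1`, then either all lines through `p₀` are fixed or all points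
on `L₀` are fixed. -/
theorem domestic_fix_near_opposite_flag {P L : Type*} (m : ℕ) (hm : 1 ≤ m)
    (inc : P → L → Prop) (s t : ℕ) (hpoly : IsGenPolygon (2 * m) inc)
    (hthick : IsThick inc) (hparams : HasParams inc s t)
    (θP : Equiv.Perm P) (θL : Equiv.Perm L) (hcoll : IsCollineation inc θP θL)
    (hdom : IsDomesticColl inc (2 * m) θP θL)
    (p₀ : P) (L₀ : L) (hp₀ : θP p₀ = p₀) (hL₀ : θL L₀ = L₀)
    (hdist : (incGraph inc).dist (Sum.inl p₀) (Sum.inr L₀) = 2 * m - 1) :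
    (∀ l : L, inc p₀ l → θL l = l) ∨ (∀ p : P, inc p L₀ → θP p = p) :=
  domestic_fix_near_opposite_flag_general m hm inc hpoly θP θL hcoll hdom p₀ L₀ hp₀ hL₀ hdist
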